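/- Let n ≥ 2 and let V_0, V_1, …, V_n be independent uniform random points on the unit sphere S^{n−1} ⊂ ℝ^n. Define s(V_0,…,V_n) = +1 if the origin lies in the interior of the convex hull of V_0,…,V_n and s(V_0,…,V_n) = −1 otherwise. Then E[ s(V_0,…,V_n) · Δ_n(0, V_1, …, V_n) · 1_{Pointy(V_0; V_1,…,V_n)} ] = 0. -/

import Mathlib

/-!
Negating `V₀` preserves the uniform measure, the volume `Δₙ(0, V₁, …, Vₙ)` and the pointy
condition, which only sees the line `ℝ V₀`. It reverses the sign `s` wherever the integrand is
nonzero: then `V₁, …, Vₙ` is a basis, and with `f` the linear form equal to `1` on every `Vᵢ`,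
the pointy condition forces `f V₀ ≠ 0`, and the origin is interior to the simplex `V₀, …, Vₙ`
exactly when `f V₀ < 0`. So the integral equals its own negative.
-/

open MeasureTheory Metric

noncomputable section

abbrev Euc (n : ℕ) := EuclideanSpace ℝ (Fin n)

def sphereUniform (n : ℕ) : Measure (Metric.sphere (0 : Euc n) 1) :=
  ((volume : Measure (Euc n)).toSphere Set.univ)⁻¹ • (volume : Measure (Euc n)).toSphere

def Pointy {n k : ℕ} (v₀ : Euc n) (v : Fin k → Euc n) : Prop :=
  (0 : (Submodule.span ℝ {v₀})ᗮ) ∈ interior (convexHull ℝ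
    (Set.range fun i => Submodule.orthogonalProjection (Submodule.span ℝ {v₀})ᗮ (v i)))

open scoped Classical in
def indic (P : Prop) : ℝ := if P then 1 else 0

open scoped Classical in
def sgn (P : Prop) : ℝ := if P then 1 else -1

open Set Module

section ConvexHullInterior

variable {ι E : Type*} [Fintype ι] [NormedAddCommGroup E] [NormedSpace ℝ E]

theorem AffineBasis.mem_interior_convexHull_iff (b : AffineBasis ι ℝ E) {x : E} :
    x ∈ interior (convexHull ℝ (range b)) ↔
      ∃ w : ι → ℝ, (∀ i, 0 < w i) ∧ ∑ i, w i = 1 ∧ ∑ i, w i • b i = x := by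
  rw [b.interior_convexHull]
  constructor
  · exact fun hx => ⟨fun i => b.coord i x, hx, b.sum_coord_apply_eq_one x,
      b.linear_combination_coord_eq_self x⟩
  · rintro ⟨w, hw, hw1, rfl⟩ i
    rw [← Finset.univ.affineCombination_eq_linear_combination _ _ hw1,
      b.coord_apply_combination_of_mem (Finset.mem_univ i) hw1]
    exact hw i

variable [FiniteDimensional ℝ E] {p : ι → E} {x : E}

theorem exists_pos_sum_smul_eq_of_mem_interior_convexHull
    (hcard : Fintype.card ι = finrank ℝ E + 1) (hx : x ∈ interior (convexHull ℝ (range p))) :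
    ∃ w : ι → ℝ, (∀ i, 0 < w i) ∧ ∑ i, w i = 1 ∧ ∑ i, w i • p i = x := by
  have hspan : affineSpan ℝ (range p) = ⊤ :=
    interior_convexHull_nonempty_iff_affineSpan_eq_top.mp ⟨x, hx⟩
  have hind : AffineIndependent ℝ p := by
    rw [affineIndependent_iff_le_finrank_vectorSpan ℝ p hcard, ← direction_affineSpan, hspan,
      AffineSubspace.direction_top, finrank_top]
  exact (AffineBasis.mk p hind hspan).mem_interior_convexHull_iff.mp hx

theorem AffineIndependent.mem_interior_convexHull (hp : AffineIndependent ℝ p)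
    (hcard : Fintype.card ι = finrank ℝ E + 1) {w : ι → ℝ} (hw : ∀ i, 0 < w i)
    (hw1 : ∑ i, w i = 1) (hx : ∑ i, w i • p i = x) :
    x ∈ interior (convexHull ℝ (range p)) :=
  (AffineBasis.mk p hp (hp.affineSpan_eq_top_iff_card_eq_finrank_add_one.mpr hcard)
    ).mem_interior_convexHull_iff.mpr ⟨w, hw, hw1, hx⟩

end ConvexHullInterior

theorem zero_notMem_convexHull_of_pos {ι E : Type*} [AddCommGroup E] [Module ℝ E]
    {p : ι → E} (f : E →ₗ[ℝ] ℝ) (hp : ∀ i, 0 < f (p i)) : (0 : E) ∉ convexHull ℝ (range p) := by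
  intro h
  simpa using convexHull_min (t := {x | 0 < f x}) (range_subset_iff.mpr hp)
    (convex_halfSpace_gt f.isLinear 0) h

theorem Submodule.sub_orthogonalProjectionOnto_orthogonal_mem {E : Type*}
    [NormedAddCommGroup E] [InnerProductSpace ℝ E] (K : Submodule ℝ E) [K.HasOrthogonalProjection]
    (x : E) : x - (Kᗮ.orthogonalProjectionOnto x : E) ∈ K := by
  rw [coe_orthogonalProjectionOnto_apply, starProjection_orthogonal_val, sub_sub_cancel]
  exact K.starProjection_apply_mem x

theorem Module.Basis.affineIndependent_cons {E : Type*} [AddCommGroup E] [Module ℝ E] {n : ℕ}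
    (b : Basis (Fin n) ℝ E) {u : E} (hu : b.sumCoords u ≠ 1) :
    AffineIndependent ℝ (Fin.cons u b : Fin (n + 1) → E) := by
  rw [affineIndependent_iff_of_fintype]
  intro w hw0 hw
  rw [Finset.univ.weightedVSub_eq_linear_combination hw0, Fin.sum_univ_succ] at hw
  rw [Fin.sum_univ_succ] at hw0
  simp only [Fin.cons_zero, Fin.cons_succ] at hw
  have hfw : w 0 * b.sumCoords u + ∑ i : Fin n, w i.succ = 0 := by
    simpa only [map_add, map_sum, map_smul, Basis.sumCoords_self_apply, smul_eq_mul, mul_one,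
      map_zero] using congrArg b.sumCoords hw
  have h0 : w 0 = 0 := by
    have : w 0 * (b.sumCoords u - 1) = 0 := by linear_combination hfw - hw0
    exact (mul_eq_zero.mp this).resolve_right (sub_ne_zero.mpr hu)
  have htail : ∀ i : Fin n, w i.succ = 0 :=
    Fintype.linearIndependent_iff.mp b.linearIndependent _ (by simpa [h0] using hw)
  exact fun i => Fin.cases h0 htail i

namespace Module.Basis

variable {E : Type*} [NormedAddCommGroup E] [InnerProductSpace ℝ E] {n : ℕ}
  (b : Basis (Fin n) ℝ E) {u : E}

theorem sumCoords_ne_zero_of_zero_mem_interior (hp : (0 : (ℝ ∙ u)ᗮ) ∈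
      interior (convexHull ℝ (range fun i => (ℝ ∙ u)ᗮ.orthogonalProjectionOnto (b i)))) :
    b.sumCoords u ≠ 0 := by
  -- If `sumCoords` kills `u`, projecting along `u` preserves it, so every projected point
  -- lies in the hyperplane `sumCoords = 1`.
  intro hu
  have hspan : ∀ x ∈ ℝ ∙ u, b.sumCoords x = 0 := by
    intro x hx
    obtain ⟨a, rfl⟩ := Submodule.mem_span_singleton.mp hx
    rw [map_smul, hu, smul_zero]
  refine zero_notMem_convexHull_of_pos (b.sumCoords ∘ₗ (ℝ ∙ u)ᗮ.subtype) (fun i => ?_)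
    (interior_subset hp)
  have := hspan _ ((ℝ ∙ u).sub_orthogonalProjectionOnto_orthogonal_mem (b i))
  rw [map_sub, sumCoords_self_apply, sub_eq_zero] at this
  exact this ▸ one_pos

theorem zero_mem_interior_convexHull_cons (hu : b.sumCoords u < 0) (hp : (0 : (ℝ ∙ u)ᗮ) ∈
      interior (convexHull ℝ (range fun i => (ℝ ∙ u)ᗮ.orthogonalProjectionOnto (b i)))) :
    (0 : E) ∈ interior (convexHull ℝ (range (Fin.cons u b : Fin (n + 1) → E))) := by
  have : FiniteDimensional ℝ E := b.finiteDimensional_of_finite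
  have hE : finrank ℝ E = n := by simpa using finrank_eq_card_basis b
  have hu0 : u ≠ 0 := by rintro rfl; simp at hu
  have hcard : Fintype.card (Fin n) = finrank ℝ (ℝ ∙ u)ᗮ + 1 := by
    have := (ℝ ∙ u).finrank_add_finrank_orthogonal
    rw [finrank_span_singleton hu0] at this
    simp only [Fintype.card_fin]
    omega
  obtain ⟨w, hw, hw1, hw0⟩ := exists_pos_sum_smul_eq_of_mem_interior_convexHull hcard hp
  -- Lifting `∑ wᵢ Pᵢ = 0` back along `u` gives `∑ wᵢ bᵢ = c u`, and `c < 0` by applying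
  -- `sumCoords`; so `0 = (-c) u + ∑ wᵢ bᵢ` is a positive combination.
  obtain ⟨c, hc⟩ : ∃ c : ℝ, c • u = ∑ i, w i • b i := by
    rw [← Submodule.mem_span_singleton]
    have hproj : ∑ i, w i • ((ℝ ∙ u)ᗮ.orthogonalProjectionOnto (b i) : E) = 0 := by
      simpa using congrArg ((↑) : (ℝ ∙ u)ᗮ → E) hw0
    rw [← sub_zero (∑ i, w i • b i), ← hproj, ← Finset.sum_sub_distrib]
    simp_rw [← smul_sub]
    exact Submodule.sum_mem _ fun i _ => Submodule.smul_mem _ _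
      ((ℝ ∙ u).sub_orthogonalProjectionOnto_orthogonal_mem (b i))
  have hcu : c * b.sumCoords u = 1 := by
    simpa [map_sum, hw1] using congrArg b.sumCoords hc
  have hc0 : c < 0 := by nlinarith
  refine (b.affineIndependent_cons (by linarith)).mem_interior_convexHull (by simp [hE])
    (w := fun i => (1 - c)⁻¹ * (Fin.cons (-c) w : Fin (n + 1) → ℝ) i) (fun i => ?_) ?_ ?_
  · refine mul_pos (by simp only [inv_pos]; linarith) (Fin.cases (by simpa using hc0) hw i)
  · rw [← Finset.mul_sum, Fin.sum_univ_succ]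
    simp only [Fin.cons_zero, Fin.cons_succ, hw1]
    field_simp [show 1 - c ≠ 0 by linarith]
    ring
  · simp only [mul_smul, ← Finset.smul_sum, Fin.sum_univ_succ, Fin.cons_zero, Fin.cons_succ, ← hc,
      neg_smul, neg_add_cancel, smul_zero]

theorem zero_mem_interior_convexHull_cons_iff (hp : (0 : (ℝ ∙ u)ᗮ) ∈
      interior (convexHull ℝ (range fun i => (ℝ ∙ u)ᗮ.orthogonalProjectionOnto (b i)))) :
    (0 : E) ∈ interior (convexHull ℝ (range (Fin.cons u b : Fin (n + 1) → E))) ↔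
      b.sumCoords u < 0 := by
  refine ⟨fun h => ?_, fun hu => b.zero_mem_interior_convexHull_cons hu hp⟩
  by_contra hu
  have hpos : 0 < b.sumCoords u :=
    (not_lt.mp hu).lt_of_ne (b.sumCoords_ne_zero_of_zero_mem_interior hp).symm
  refine zero_notMem_convexHull_of_pos b.sumCoords (fun i => ?_) (interior_subset h)
  exact Fin.cases hpos (fun i => by simp) i

end Module.Basis

theorem MeasureTheory.Measure.map_neg_toSphere {E : Type*} [NormedAddCommGroup E]
    [NormedSpace ℝ E] [MeasurableSpace E] [BorelSpace E] (μ : Measure E) [μ.IsNegInvariant] :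
    μ.toSphere.map Neg.neg = μ.toSphere := by
  ext s hs
  rw [Measure.map_apply continuous_neg.measurable hs,
    μ.toSphere_apply' (hs.preimage continuous_neg.measurable), μ.toSphere_apply' hs]
  have : Subtype.val '' (Neg.neg ⁻¹' s : Set (sphere (0 : E) 1)) = -(Subtype.val '' s) := by
    ext y
    constructor
    · rintro ⟨x, hx, rfl⟩
      exact Set.mem_neg.mpr ⟨-x, hx, coe_neg_sphere x⟩
    · rintro ⟨x, hx, hxy⟩
      exact ⟨-x, by rwa [Set.mem_preimage, neg_neg], by rw [coe_neg_sphere, hxy, neg_neg]⟩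
  rw [this, Set.smul_neg, Measure.measure_neg]

instance (n : ℕ) : IsFiniteMeasure (sphereUniform n) := by
  constructor
  rw [sphereUniform, Measure.smul_apply, smul_eq_mul]
  rcases eq_or_ne ((volume : Measure (Euc n)).toSphere univ) 0 with h | h
  · simp [h]
  · rw [ENNReal.inv_mul_cancel h (measure_ne_top _ _)]
    exact ENNReal.one_lt_top

theorem measurePreserving_neg_sphereUniform (n : ℕ) :
    MeasurePreserving Neg.neg (sphereUniform n) (sphereUniform n) :=
  ⟨continuous_neg.measurable, by rw [sphereUniform, Measure.map_smul, Measure.map_neg_toSphere]⟩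

namespace MeasurableEquiv

variable (α : Type*) [MeasurableSpace α] [InvolutiveNeg α] [MeasurableNeg α] (k : ℕ)

def negHead : (Fin (k + 1) → α) ≃ᵐ (Fin (k + 1) → α) :=
  piCongrRight fun i => if i = 0 then .neg α else .refl α

variable {α k}

theorem negHead_apply_zero (V : Fin (k + 1) → α) : negHead α k V 0 = -V 0 := rfl

theorem negHead_apply_succ (V : Fin (k + 1) → α) (i : Fin k) :
    negHead α k V i.succ = V i.succ := by
  show (if i.succ = 0 then MeasurableEquiv.neg α else .refl α) (V i.succ) = _
  rw [if_neg i.succ_ne_zero]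
  rfl

end MeasurableEquiv

theorem MeasureTheory.MeasurePreserving.negHead {α : Type*} [MeasurableSpace α] [InvolutiveNeg α]
    [MeasurableNeg α] {μ : Measure α} [SigmaFinite μ] (hμ : MeasurePreserving Neg.neg μ μ)
    (k : ℕ) :
    MeasurePreserving (MeasurableEquiv.negHead α k) (Measure.pi fun _ => μ)
      (Measure.pi fun _ => μ) :=
  measurePreserving_pi _ _ fun i => by
    by_cases hi : i = 0
    · simpa [hi] using hμ
    · simpa [hi] using MeasurePreserving.id μ

theorem integral_eq_zero_of_comp_eq_neg {α : Type*} [MeasurableSpace α] {μ : Measure α}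
    (e : α ≃ᵐ α) (he : MeasurePreserving e μ μ) {F : α → ℝ} (hF : ∀ x, F (e x) = -F x) :
    ∫ x, F x ∂μ = 0 := by
  have := he.integral_comp' F
  simp only [hF, integral_neg] at this
  linarith

theorem sgn_not (P : Prop) : sgn (¬P) = -sgn P := by
  by_cases h : P <;> simp [sgn, h]

theorem pointy_neg_iff {n k : ℕ} (u : Euc n) (v : Fin k → Euc n) : Pointy (-u) v ↔ Pointy u v := by
  unfold Pointy
  rw! [← Set.neg_singleton, Submodule.span_neg]
  rfl

theorem MeasureTheory.Measure.addHaar_convexHull_insert_zero {ι E : Type*} [NormedAddCommGroup E]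
    [NormedSpace ℝ E] [MeasurableSpace E] [BorelSpace E] [FiniteDimensional ℝ E] (μ : Measure E)
    [μ.IsAddHaarMeasure] {v : ι → E} (hv : Submodule.span ℝ (range v) ≠ ⊤) :
    μ (convexHull ℝ (insert 0 (range v))) = 0 :=
  measure_mono_null (convexHull_min (insert_subset (zero_mem _) Submodule.subset_span)
    (Submodule.convex _)) (Measure.addHaar_submodule μ _ hv)

def signedPinnedVolume {n : ℕ} (u : Euc n) (v : Fin n → Euc n) : ℝ :=
  sgn ((0 : Euc n) ∈ interior (convexHull ℝ (range (Fin.cons u v : Fin (n + 1) → Euc n)))) *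
    (volume (convexHull ℝ (insert (0 : Euc n) (range v)))).toReal * indic (Pointy u v)

theorem signedPinnedVolume_neg {n : ℕ} (u : Euc n) (v : Fin n → Euc n) :
    signedPinnedVolume (-u) v = -signedPinnedVolume u v := by
  by_cases hp : Pointy u v
  swap
  · simp [signedPinnedVolume, indic, hp, pointy_neg_iff]
  by_cases hv : LinearIndependent ℝ v
  swap
  · have hspan : Submodule.span ℝ (range v) ≠ ⊤ := fun h =>
      hv (linearIndependent_of_top_le_span_of_card_eq_finrank h.ge (by simp))
    simp [signedPinnedVolume, volume.addHaar_convexHull_insert_zero hspan]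
  obtain ⟨b, rfl⟩ : ∃ b : Basis (Fin n) ℝ (Euc n), ⇑b = v :=
    ⟨_, coe_basisOfLinearIndependentOfCardEqFinrank' v hv (by simp)⟩
  have hne := b.sumCoords_ne_zero_of_zero_mem_interior hp
  have hpos : 0 < b.sumCoords u ↔ ¬b.sumCoords u < 0 :=
    ⟨fun h => h.not_gt, fun h => (not_lt.mp h).lt_of_ne hne.symm⟩
  simp only [signedPinnedVolume, b.zero_mem_interior_convexHull_cons_iff hp,
    b.zero_mem_interior_convexHull_cons_iff ((pointy_neg_iff u b).mpr hp), map_neg, neg_lt_zero,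
    hpos, sgn_not, pointy_neg_iff]
  ring

theorem expectation_signed_pinned_simplex_pointy_general (n : ℕ) :
    (∫ V : Fin (n + 1) → Metric.sphere (0 : Euc n) 1,
        sgn ((0 : Euc n) ∈ interior (convexHull ℝ (Set.range fun i => (V i : Euc n)))) *
          (volume (convexHull ℝ
            (insert (0 : Euc n) (Set.range fun i : Fin n => (V i.succ : Euc n))))).toReal *
          indic (Pointy ((V 0 : Euc n)) fun i : Fin n => (V i.succ : Euc n))
        ∂(Measure.pi fun _ => sphereUniform n)) = 0 := by
  have hcons : ∀ V : Fin (n + 1) → sphere (0 : Euc n) 1,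
      (fun i => (V i : Euc n)) = Fin.cons (V 0 : Euc n) fun i => (V i.succ : Euc n) :=
    fun V => (Fin.cons_self_tail _).symm
  have key := integral_eq_zero_of_comp_eq_neg (MeasurableEquiv.negHead _ n)
    ((measurePreserving_neg_sphereUniform n).negHead n)
    (F := fun V => signedPinnedVolume (V 0 : Euc n) fun i => (V i.succ : Euc n)) fun V => by
      simp only [MeasurableEquiv.negHead_apply_zero, MeasurableEquiv.negHead_apply_succ,
        coe_neg_sphere, signedPinnedVolume_neg]
  rw [← key]
  congr with V
  rw [signedPinnedVolume, ← hcons]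

/-- The signed volume of the pinned simplex under the pointy condition has zero mean:
`E[s(V₀,…,V_n) Δ_n(0,V₁,…,V_n) 1_Pointy(V₀;V₁,…,V_n)] = 0`. -/
theorem expectation_signed_pinned_simplex_pointy (n : ℕ) (hn : 2 ≤ n) :
    (∫ V : Fin (n + 1) → Metric.sphere (0 : Euc n) 1,
        sgn ((0 : Euc n) ∈ interior (convexHull ℝ (Set.range fun i => (V i : Euc n)))) *
          (volume (convexHull ℝ
            (insert (0 : Euc n) (Set.range fun i : Fin n => (V i.succ : Euc n))))).toReal *
          indic (Pointy ((V 0 : Euc n)) fun i : Fin n => (V i.succ : Euc n))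
        ∂(Measure.pi fun _ => sphereUniform n)) = 0 :=
  expectation_signed_pinned_simplex_pointy_general n
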